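/- arXiv:2308.14964 — 4 statements merged into one kernel-verified Lean document; each statement's English description precedes it below -/
import Mathlib

section
/- Let M be a compact metric space and suppose there exist real numbers ρ < 1, ρ > 0 and N ∈ ℕ such that for every pair of points x, x' ∈ M there is a ρ-chain of length N from x to x'. Then M is linearly connected; moreover one may take the linear connectivity constant to be ν = 2Nρ/(1−ρ), i.e., every pair of points x, x' ∈ M is contained in a compact connected subset of M of diameter at most (2Nρ/(1−ρ))·d(x,x'). -/
/-!
Refine the ρ-chain from `x` to `x'` repeatedly, inserting a ρ-chain between any two consecutive
points. After `k` rounds consecutive points are at most `ρ ^ k * d(x, x')` apart, and round `k + 1`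
moves every point by at most `N ρ ^ (k + 1) * d(x, x')`, so all points stay within
`N ρ d(x, x') / (1 - ρ)` of `x`. The closure of all these points is compact, and it is connected
because each of its points can be reached from `x` by `ε`-chains inside it, for every `ε > 0`.
-/

open Set Metric Relation

theorem reflTransGen_of_forall_succ {α : Type*} {r : α → α → Prop} {f : ℕ → α}
    (h : ∀ i, r (f i) (f (i + 1))) (n : ℕ) : ReflTransGen r (f 0) (f n) := by
  induction n with
  | zero => rfl
  | succ n ih => exact ih.tail (h n)

section

variable {M : Type*}

def refineChain (N : ℕ) (B : M → M → ℕ → M) (c : ℕ → M) : ℕ → M :=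
  fun j => B (c (j / N)) (c (j / N + 1)) (j % N)

-- On the indices `0, …, N ^ k`, level `k` is the `k`-fold refined chain from `x` to `x'`; beyond
-- them it is constantly `x'`, since chains from `x'` to `x'` are constant.
def chainLevel (N : ℕ) (B : M → M → ℕ → M) (x x' : M) (k : ℕ) : ℕ → M :=
  (refineChain N B)^[k] fun j => if j = 0 then x else x'

theorem chainLevel_succ {N : ℕ} {B : M → M → ℕ → M} {x x' : M} (k : ℕ) :
    chainLevel N B x x' (k + 1) = refineChain N B (chainLevel N B x x' k) :=
  Function.iterate_succ_apply' _ _ _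

variable [MetricSpace M]

theorem isPreconnected_of_forall_reflTransGen {S : Set M} (hS : IsCompact S) {x : M} (hx : x ∈ S)
    (h : ∀ ε > 0, ∀ q ∈ S, ReflTransGen (fun a b => b ∈ S ∧ dist a b < ε) x q) :
    IsPreconnected S := by
  have key : ∀ u v : Set M, IsClosed u → IsClosed v → S ⊆ u ∪ v → Disjoint u v → x ∈ u →
      S ⊆ u := by
    intro u v hu hv hSuv huv hxu
    have hdisj : Disjoint (S ∩ u) v := huv.mono_left inter_subset_right
    -- `S ∩ u` and `v` are `δ`-separated, so `δ`-chains in `S` starting from `x` never leave `u`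
    obtain ⟨δ, hδ, hsep⟩ := hdisj.exists_thickenings (hS.inter_right hu) hv
    have reach : ∀ q, ReflTransGen (fun a b => b ∈ S ∧ dist a b < δ) x q → q ∈ S ∩ u := by
      intro q hq
      induction hq with
      | refl => exact ⟨hx, hxu⟩
      | tail _ hbc ih =>
        obtain ⟨hc, hdist⟩ := hbc
        have hc_thick : _ ∈ thickening δ (S ∩ u) := mem_thickening_iff.2 ⟨_, ih, by rwa [dist_comm]⟩
        exact ⟨hc, (hSuv hc).resolve_right fun hcv =>
          hsep.le_bot ⟨hc_thick, self_subset_thickening hδ v hcv⟩⟩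
    exact fun q hq => (reach q (h δ hδ q hq)).2
  rw [isPreconnected_iff_subset_of_fully_disjoint_closed hS.isClosed]
  intro u v hu hv hSuv huv
  rcases hSuv hx with hxu | hxv
  · exact .inl (key u v hu hv hSuv huv hxu)
  · exact .inr (key v u hv hu (union_comm u v ▸ hSuv) huv.symm hxv)

def IsRhoChain (ρ : ℝ) (N : ℕ) (p q : M) (b : ℕ → M) : Prop :=
  b 0 = p ∧ b N = q ∧ ∀ j : ℕ, 1 ≤ j → j ≤ N → dist (b (j - 1)) (b j) ≤ ρ * dist p q

namespace IsRhoChain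

variable {ρ : ℝ} {N : ℕ} {p q : M} {b : ℕ → M}

theorem dist_succ_le (hb : IsRhoChain ρ N p q b) {j : ℕ} (hj : j < N) :
    dist (b j) (b (j + 1)) ≤ ρ * dist p q := by
  simpa using hb.2.2 (j + 1) (by omega) hj

theorem dist_le (hb : IsRhoChain ρ N p q b) {j : ℕ} (hj : j ≤ N) :
    dist p (b j) ≤ j * (ρ * dist p q) := by
  induction j with
  | zero => simp [hb.1]
  | succ j ih =>
    calc dist p (b (j + 1)) ≤ dist p (b j) + dist (b j) (b (j + 1)) := dist_triangle _ _ _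
      _ ≤ j * (ρ * dist p q) + ρ * dist p q := add_le_add (ih (by omega)) (hb.dist_succ_le hj)
      _ = (j + 1 : ℕ) * (ρ * dist p q) := by push_cast; ring

theorem dist_le_mul (hb : IsRhoChain ρ N p q b) : dist p q ≤ N * (ρ * dist p q) := by
  simpa [hb.2.1] using hb.dist_le le_rfl

theorem eq_of_self (hb : IsRhoChain ρ N p p b) {j : ℕ} (hj : j ≤ N) : b j = p :=
  (dist_le_zero.1 (by simpa using hb.dist_le hj)).symm

end IsRhoChain

section Refinement

variable {ρ : ℝ} {N : ℕ} {B : M → M → ℕ → M}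

theorem refineChain_mul (hB : ∀ p q, IsRhoChain ρ N p q (B p q)) (hN : 0 < N) (c : ℕ → M)
    (j : ℕ) : refineChain N B c (N * j) = c j := by
  simp only [refineChain, Nat.mul_div_cancel_left _ hN, Nat.mul_mod_right, (hB _ _).1]

theorem iterate_refineChain_pow_mul (hB : ∀ p q, IsRhoChain ρ N p q (B p q)) (hN : 0 < N)
    (n : ℕ) (c : ℕ → M) (j : ℕ) : (refineChain N B)^[n] c (N ^ n * j) = c j := by
  induction n generalizing c j with
  | zero => simp
  | succ n ih =>
    rw [Function.iterate_succ_apply, pow_succ, mul_assoc, ih, refineChain_mul hB hN]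

theorem refineChain_succ (hB : ∀ p q, IsRhoChain ρ N p q (B p q)) (hN : 0 < N) (c : ℕ → M)
    (j : ℕ) : refineChain N B c (j + 1) = B (c (j / N)) (c (j / N + 1)) (j % N + 1) := by
  have hj := Nat.mod_add_div j N
  rcases Nat.lt_or_ge (j % N + 1) N with hlt | hge
  · obtain ⟨hdiv, hmod⟩ : (j + 1) / N = j / N ∧ (j + 1) % N = j % N + 1 :=
      (Nat.div_mod_unique hN).2 ⟨by linarith, hlt⟩
    rw [refineChain, hdiv, hmod]
  · have heq : j % N + 1 = N := le_antisymm (Nat.mod_lt j hN) hge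
    obtain ⟨hdiv, hmod⟩ : (j + 1) / N = j / N + 1 ∧ (j + 1) % N = 0 :=
      (Nat.div_mod_unique hN).2 ⟨by linarith [Nat.mul_add N (j / N) 1], hN⟩
    rw [refineChain, hdiv, hmod, heq, (hB _ _).1, (hB _ _).2.1]

theorem dist_refineChain_succ_le (hB : ∀ p q, IsRhoChain ρ N p q (B p q)) (hN : 0 < N)
    (hρ : 0 ≤ ρ) {c : ℕ → M} {δ : ℝ} (hc : ∀ j, dist (c j) (c (j + 1)) ≤ δ) (j : ℕ) :
    dist (refineChain N B c j) (refineChain N B c (j + 1)) ≤ ρ * δ := by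
  rw [refineChain_succ hB hN]
  exact ((hB _ _).dist_succ_le (Nat.mod_lt j hN)).trans (mul_le_mul_of_nonneg_left (hc _) hρ)

theorem dist_refineChain_le (hB : ∀ p q, IsRhoChain ρ N p q (B p q)) (hN : 0 < N)
    (hρ : 0 ≤ ρ) {c : ℕ → M} {δ : ℝ} (hc : ∀ j, dist (c j) (c (j + 1)) ≤ δ) (j : ℕ) :
    dist (c (j / N)) (refineChain N B c j) ≤ N * (ρ * δ) := by
  have hjN := Nat.mod_lt j hN
  calc dist (c (j / N)) (refineChain N B c j)
        ≤ (j % N : ℕ) * (ρ * dist (c (j / N)) (c (j / N + 1))) := (hB _ _).dist_le hjN.le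
    _ ≤ N * (ρ * δ) := by
        gcongr
        exact hc _

end Refinement

section Levels

variable {ρ : ℝ} {N : ℕ} {B : M → M → ℕ → M} {x x' : M}

theorem chainLevel_add_pow_mul (hB : ∀ p q, IsRhoChain ρ N p q (B p q)) (hN : 0 < N)
    (n k j : ℕ) : chainLevel N B x x' (n + k) (N ^ n * j) = chainLevel N B x x' k j := by
  rw [chainLevel, Function.iterate_add_apply, iterate_refineChain_pow_mul hB hN, chainLevel]

theorem chainLevel_apply_zero (hB : ∀ p q, IsRhoChain ρ N p q (B p q)) (hN : 0 < N) (k : ℕ) :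
    chainLevel N B x x' k 0 = x := by
  simpa [chainLevel] using chainLevel_add_pow_mul (x := x) (x' := x') hB hN k 0 0

theorem chainLevel_one_apply (hB : ∀ p q, IsRhoChain ρ N p q (B p q)) (hN : 0 < N) :
    chainLevel N B x x' 1 N = x' := by
  simpa [chainLevel] using chainLevel_add_pow_mul (x := x) (x' := x') hB hN 1 0 1

theorem dist_chainLevel_succ_le (hB : ∀ p q, IsRhoChain ρ N p q (B p q)) (hN : 0 < N)
    (hρ : 0 ≤ ρ) (k j : ℕ) :
    dist (chainLevel N B x x' k j) (chainLevel N B x x' k (j + 1)) ≤ ρ ^ k * dist x x' := by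
  induction k generalizing j with
  | zero => rcases j with _ | j <;> simp [chainLevel]
  | succ k ih =>
    rw [chainLevel_succ, pow_succ', mul_assoc]
    exact dist_refineChain_succ_le hB hN hρ ih j

theorem dist_chainLevel_one_le (hB : ∀ p q, IsRhoChain ρ N p q (B p q)) (hN : 0 < N)
    (hρ : 0 ≤ ρ) (j : ℕ) :
    dist x (chainLevel N B x x' 1 j) ≤ N * (ρ * dist x x') := by
  simp only [chainLevel, Function.iterate_one, refineChain]
  by_cases hj : j / N = 0
  · simp only [hj, if_true, zero_add, one_ne_zero, if_false]
    refine ((hB x x').dist_le (Nat.mod_lt j hN).le).trans ?_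
    gcongr
    exact (Nat.mod_lt j hN).le
  · simp only [hj, if_false, Nat.add_eq_zero_iff, one_ne_zero, and_false]
    rw [(hB x' x').eq_of_self (Nat.mod_lt j hN).le]
    exact (hB x x').dist_le_mul

theorem dist_chainLevel_le (hB : ∀ p q, IsRhoChain ρ N p q (B p q)) (hN : 0 < N)
    (hρ0 : 0 ≤ ρ) (hρ1 : ρ < 1) (k j : ℕ) :
    dist x (chainLevel N B x x' (k + 1) j) ≤ N * ρ * dist x x' / (1 - ρ) := by
  set R := N * ρ * dist x x' / (1 - ρ)
  have hR : R * (1 - ρ) = N * (ρ * dist x x') := by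
    rw [div_mul_cancel₀ _ (sub_ne_zero.2 hρ1.ne')]; ring
  -- invariant: refining level `k + 1` moves points by at most `R (1 - ρ) ρ ^ (k + 1)`
  have key : ∀ k j, dist x (chainLevel N B x x' (k + 1) j) + R * ρ ^ (k + 1) ≤ R := by
    intro k
    induction k with
    | zero =>
      intro j
      rw [zero_add, pow_one]
      linarith [dist_chainLevel_one_le (x := x) (x' := x') hB hN hρ0 j]
    | succ k ih =>
      intro j
      have hstep := dist_refineChain_le hB hN hρ0
        (dist_chainLevel_succ_le (x := x) (x' := x') hB hN hρ0 (k + 1)) j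
      rw [← chainLevel_succ] at hstep
      have hpow :
          R * ρ ^ (k + 1 + 1) = R * ρ ^ (k + 1) - N * (ρ * (ρ ^ (k + 1) * dist x x')) := by
        rw [pow_succ]; linear_combination (-ρ ^ (k + 1)) * hR
      linarith [ih (j / N), dist_triangle x (chainLevel N B x x' (k + 1) (j / N))
        (chainLevel N B x x' (k + 1 + 1) j)]
  have hR0 : 0 ≤ R := div_nonneg (by positivity) (sub_pos.2 hρ1).le
  have hRρ : 0 ≤ R * ρ ^ (k + 1) := mul_nonneg hR0 (by positivity)
  linarith [key k j]

end Levels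

theorem exists_isConnected_subset_closedBall_of_isRhoChain [CompactSpace M] {ρ : ℝ} {N : ℕ}
    {B : M → M → ℕ → M} (hB : ∀ p q, IsRhoChain ρ N p q (B p q)) (hN : 0 < N) (hρ0 : 0 ≤ ρ)
    (hρ1 : ρ < 1) (x x' : M) :
    ∃ S : Set M, IsCompact S ∧ IsConnected S ∧ x ∈ S ∧ x' ∈ S ∧
      S ⊆ closedBall x (N * ρ * dist x x' / (1 - ρ)) := by
  set S := closure (⋃ k, range (chainLevel N B x x' (k + 1)))
  have hmem : ∀ k j, chainLevel N B x x' (k + 1) j ∈ S :=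
    fun k j => subset_closure (mem_iUnion_of_mem k ⟨j, rfl⟩)
  have hx : x ∈ S := by simpa only [chainLevel_apply_zero hB hN] using hmem 0 0
  have hx' : x' ∈ S := by simpa only [zero_add, chainLevel_one_apply hB hN] using hmem 0 N
  refine ⟨S, isClosed_closure.isCompact, ⟨⟨x, hx⟩, ?_⟩, hx, hx', ?_⟩
  · refine isPreconnected_of_forall_reflTransGen isClosed_closure.isCompact hx fun ε hε q hq => ?_
    obtain ⟨_, ⟨_, ⟨k, rfl⟩, j, rfl⟩, hqq'⟩ := mem_closure_iff.1 hq ε hε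
    have hsmall : Filter.Tendsto (fun n => ρ ^ n * dist x x') Filter.atTop (nhds 0) := by
      simpa using (tendsto_pow_atTop_nhds_zero_of_lt_one hρ0 hρ1).mul_const (dist x x')
    obtain ⟨n, hn⟩ := Filter.eventually_atTop.1 (hsmall.eventually (gt_mem_nhds hε))
    have hreach := reflTransGen_of_forall_succ (r := fun a b => b ∈ S ∧ dist a b < ε)
      (fun i => ⟨hmem (n + k) (i + 1),
        (dist_chainLevel_succ_le hB hN hρ0 _ i).trans_lt (hn _ (by omega))⟩) (N ^ n * j)
    rw [chainLevel_apply_zero hB hN, add_assoc, chainLevel_add_pow_mul hB hN] at hreach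
    exact hreach.tail ⟨hq, by rwa [dist_comm]⟩
  · refine closure_minimal (iUnion_subset fun k => range_subset_iff.2 fun j => ?_)
      isClosed_closedBall
    exact mem_closedBall'.2 (dist_chainLevel_le hB hN hρ0 hρ1 k j)

end

/-- If `M` is a compact metric space and there are `0 < ρ < 1` and `N : ℕ` such
that every pair of points `x, x'` is joined by a `ρ`-chain of length `N` (a sequence
`x = b 0, …, b N = x'` with consecutive distances at most `ρ * dist x x'`), then every pair of
points is contained in a compact connected subset of diameter at most
`(2 * N * ρ / (1 - ρ)) * dist x x'`. -/
theorem compact_linearly_connected_of_chains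
    {M : Type*} [MetricSpace M] [CompactSpace M]
    (ρ : ℝ) (hρ0 : 0 < ρ) (hρ1 : ρ < 1) (N : ℕ)
    (hchain : ∀ x x' : M, ∃ b : ℕ → M, b 0 = x ∧ b N = x' ∧
      ∀ j : ℕ, 1 ≤ j → j ≤ N → dist (b (j - 1)) (b j) ≤ ρ * dist x x') :
    ∀ x x' : M, ∃ S : Set M, IsCompact S ∧ IsConnected S ∧ x ∈ S ∧ x' ∈ S ∧
      Metric.diam S ≤ (2 * N * ρ / (1 - ρ)) * dist x x' := by
  intro x x'
  rcases N.eq_zero_or_pos with rfl | hN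
  · obtain ⟨b, rfl, rfl, -⟩ := hchain x x'
    exact ⟨{b 0}, isCompact_singleton, isConnected_singleton, rfl, rfl, by simp⟩
  choose B hB using hchain
  obtain ⟨S, hSc, hSconn, hxS, hx'S, hSball⟩ :=
    exists_isConnected_subset_closedBall_of_isRhoChain hB hN hρ0.le hρ1 x x'
  refine ⟨S, hSc, hSconn, hxS, hx'S, (diam_mono hSball isBounded_closedBall).trans ?_⟩
  have hR : 0 ≤ N * ρ * dist x x' / (1 - ρ) := by
    have := sub_pos.2 hρ1
    positivity
  calc diam (closedBall x (N * ρ * dist x x' / (1 - ρ))) ≤ 2 * (N * ρ * dist x x' / (1 - ρ)) :=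
        diam_closedBall hR
    _ = 2 * N * ρ / (1 - ρ) * dist x x' := by ring
end

section
/- Let M be a complete metric space and suppose there exist real numbers ρ < 1, ρ > 0 and N ∈ ℕ such that for every pair of points x, x' ∈ M there is a ρ-chain of length N from x to x'. Then, with ν = 2Nρ/(1−ρ), any two points x, x' ∈ M are joined by a continuous path γ : [0,1] → M with γ(0) = x, γ(1) = x' whose image has diameter at most ν·d(x,x'). -/
/-!
Refining every step of a `ρ`-chain by another `ρ`-chain, `m` times, gives `N ^ m + 1` points from
`x` to `x'` with consecutive distances at most `ρ ^ m * dist x x'`. Reading off level `m` at the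
index `⌊t * N ^ m⌋₊` gives maps `u m : [0,1] → M` that move by at most `N * ρ ^ (m + 1) * dist x x'`
from one level to the next, so they converge (by completeness) to a map `γ`; and `u m` moves by at
most `ρ ^ m * dist x x'` when `t` moves by less than `N ^ (-m)`, which makes `γ` uniformly
continuous. Every point of `γ` lies within `N ρ dist x x' / (1 - ρ)` of `x`, which gives the
bound on the diameter.
-/

open Filter Topology

section GeometricLimit

variable {X M : Type*} [PseudoMetricSpace X] [PseudoMetricSpace M] [CompleteSpace M]

theorem exists_uniformContinuous_tendsto_of_dist_succ_le_geometric {u : ℕ → X → M} {C D r : ℝ}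
    (hr0 : 0 ≤ r) (hr1 : r < 1) (hu : ∀ m t, dist (u m t) (u (m + 1) t) ≤ C * r ^ m)
    (hosc : ∀ m, ∃ δ > 0, ∀ s t, dist s t < δ → dist (u m s) (u m t) ≤ D * r ^ m) :
    ∃ γ : X → M, UniformContinuous γ ∧ ∀ t, Tendsto (u · t) atTop (𝓝 (γ t)) := by
  choose γ hγ using fun t => cauchySeq_tendsto_of_complete
    (cauchySeq_of_le_geometric r C hr1 (hu · t))
  refine ⟨γ, Metric.uniformContinuous_iff.2 fun ε hε => ?_, hγ⟩
  have hsmall : Tendsto (fun m => (D + 2 * (C / (1 - r))) * r ^ m) atTop (𝓝 0) := by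
    simpa using (tendsto_pow_atTop_nhds_zero_of_lt_one hr0 hr1).const_mul _
  obtain ⟨m, hm⟩ := (hsmall.eventually (gt_mem_nhds hε)).exists
  obtain ⟨δ, hδ, hδu⟩ := hosc m
  refine ⟨δ, hδ, fun s t hst => ?_⟩
  have htail t : dist (u m t) (γ t) ≤ C * r ^ m / (1 - r) :=
    dist_le_of_le_geometric_of_tendsto r C hr1 (hu · t) (hγ t) m
  calc dist (γ s) (γ t) ≤ dist (γ s) (u m s) + dist (u m s) (u m t) + dist (u m t) (γ t) :=
        dist_triangle4 _ _ _ _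
    _ ≤ C * r ^ m / (1 - r) + D * r ^ m + C * r ^ m / (1 - r) := by
        rw [dist_comm (γ s)]
        gcongr
        exacts [htail s, hδu s t hst, htail t]
    _ = (D + 2 * (C / (1 - r))) * r ^ m := by ring
    _ < ε := hm

end GeometricLimit

section ChainGrid

variable {M : Type*} [PseudoMetricSpace M]

structure IsShortChain (ρ : ℝ) (N : ℕ) (x x' : M) (b : ℕ → M) : Prop where
  first : b 0 = x
  last : b N = x'
  dist_succ_le : ∀ j < N, dist (b j) (b (j + 1)) ≤ ρ * dist x x'

/-- `chainGrid c N x x' m k` is the `k`-th point of the `m`-th refinement of the pair `x, x'`: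
each step of level `m` is replaced by the `c`-chain joining its endpoints. -/
def chainGrid (c : M → M → ℕ → M) (N : ℕ) (x x' : M) : ℕ → ℕ → M
  | 0, k => if k = 0 then x else x'
  | m + 1, k => c (chainGrid c N x x' m (k / N)) (chainGrid c N x x' m (k / N + 1)) (k % N)

variable {ρ : ℝ} {N : ℕ} {c : M → M → ℕ → M} {x x' : M}

theorem chainGrid_succ_mul_add (hc : ∀ a b, IsShortChain ρ N a b (c a b)) (hN : 0 < N) (m q : ℕ)
    {r : ℕ} (hr : r ≤ N) :
    chainGrid c N x x' (m + 1) (N * q + r) =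
      c (chainGrid c N x x' m q) (chainGrid c N x x' m (q + 1)) r := by
  rcases hr.lt_or_eq with hr | rfl
  · simp only [chainGrid, Nat.mul_add_div hN, Nat.mul_add_mod, Nat.div_eq_of_lt hr,
      Nat.mod_eq_of_lt hr, add_zero]
  · rw [← Nat.mul_succ, (hc _ _).last]
    simp only [chainGrid, Nat.mul_div_cancel_left _ hN, Nat.mul_mod_right, (hc _ _).first]

theorem chainGrid_succ_mul (hc : ∀ a b, IsShortChain ρ N a b (c a b)) (hN : 0 < N) (m q : ℕ) :
    chainGrid c N x x' (m + 1) (N * q) = chainGrid c N x x' m q := by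
  simpa [(hc _ _).first] using
    chainGrid_succ_mul_add (x := x) (x' := x') hc hN m q (Nat.zero_le N)

theorem chainGrid_apply_zero (hc : ∀ a b, IsShortChain ρ N a b (c a b)) (hN : 0 < N) (m : ℕ) :
    chainGrid c N x x' m 0 = x := by
  induction m with
  | zero => rfl
  | succ m ih => simpa [ih] using chainGrid_succ_mul (x := x) (x' := x') hc hN m 0

theorem chainGrid_apply_pow (hc : ∀ a b, IsShortChain ρ N a b (c a b)) (hN : 0 < N) (m : ℕ) :
    chainGrid c N x x' m (N ^ m) = x' := by
  induction m with
  | zero => simp [chainGrid]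
  | succ m ih => rw [pow_succ', chainGrid_succ_mul hc hN, ih]

theorem dist_chainGrid_succ_le (hc : ∀ a b, IsShortChain ρ N a b (c a b)) (hN : 0 < N)
    (hρ : 0 ≤ ρ) {m k : ℕ} (hk : k < N ^ m) :
    dist (chainGrid c N x x' m k) (chainGrid c N x x' m (k + 1)) ≤ ρ ^ m * dist x x' := by
  induction m generalizing k with
  | zero =>
    obtain rfl : k = 0 := by simpa using hk
    simp [chainGrid]
  | succ m ih =>
    have hr : k % N < N := Nat.mod_lt k hN
    have hq : k / N < N ^ m := by
      rw [Nat.div_lt_iff_lt_mul hN, ← pow_succ]; exact hk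
    have hsplit := Nat.div_add_mod k N
    set q := k / N
    set r := k % N
    rw [← hsplit, add_assoc, chainGrid_succ_mul_add hc hN m q hr.le,
      chainGrid_succ_mul_add hc hN m q hr]
    calc _ ≤ ρ * dist (chainGrid c N x x' m q) (chainGrid c N x x' m (q + 1)) :=
          (hc _ _).dist_succ_le r hr
      _ ≤ ρ * (ρ ^ m * dist x x') := by gcongr; exact ih hq
      _ = ρ ^ (m + 1) * dist x x' := by ring

theorem dist_chainGrid_le (hc : ∀ a b, IsShortChain ρ N a b (c a b)) (hN : 0 < N) (hρ : 0 ≤ ρ)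
    {m k l : ℕ} (hkl : k ≤ l) (hl : l ≤ N ^ m) :
    dist (chainGrid c N x x' m k) (chainGrid c N x x' m l) ≤
      ((l - k : ℕ) : ℝ) * (ρ ^ m * dist x x') := by
  have := dist_le_Ico_sum_of_dist_le (f := chainGrid c N x x' m) hkl (d := fun _ => _)
    fun _ hi => dist_chainGrid_succ_le hc hN hρ (hi.trans_le hl)
  simpa using this

end ChainGrid

section ChainApprox

variable {M : Type*} [PseudoMetricSpace M]

noncomputable def chainApprox (c : M → M → ℕ → M) (N : ℕ) (x x' : M) (m : ℕ)
    (t : unitInterval) : M :=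
  chainGrid c N x x' m ⌊(t : ℝ) * N ^ m⌋₊

variable {ρ : ℝ} {N : ℕ} {c : M → M → ℕ → M} {x x' : M}

theorem floor_mul_pow_le (t : unitInterval) (m : ℕ) : ⌊(t : ℝ) * N ^ m⌋₊ ≤ N ^ m := by
  have : (t : ℝ) * N ^ m ≤ (N ^ m : ℕ) := by
    push_cast; exact mul_le_of_le_one_left (by positivity) t.2.2
  exact (Nat.floor_le_floor this).trans_eq (Nat.floor_natCast _)

theorem chainApprox_zero (hc : ∀ a b, IsShortChain ρ N a b (c a b)) (hN : 0 < N) (m : ℕ) :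
    chainApprox c N x x' m 0 = x := by
  simp [chainApprox, chainGrid_apply_zero hc hN]

theorem chainApprox_one (hc : ∀ a b, IsShortChain ρ N a b (c a b)) (hN : 0 < N) (m : ℕ) :
    chainApprox c N x x' m 1 = x' := by
  rw [chainApprox, Set.Icc.coe_one, one_mul, ← Nat.cast_pow, Nat.floor_natCast]
  exact chainGrid_apply_pow hc hN m

theorem dist_chainApprox_succ_le (hc : ∀ a b, IsShortChain ρ N a b (c a b)) (hN : 0 < N)
    (hρ : 0 ≤ ρ) (m : ℕ) (t : unitInterval) :
    dist (chainApprox c N x x' m t) (chainApprox c N x x' (m + 1) t) ≤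
      N * ρ * dist x x' * ρ ^ m := by
  set k := ⌊(t : ℝ) * N ^ (m + 1)⌋₊
  -- the level-`m` index is `k / N`, which is level-`m + 1` index `N * (k / N)`
  have hdiv : ⌊(t : ℝ) * N ^ m⌋₊ = k / N := by
    rw [← Nat.floor_div_natCast, pow_succ, ← mul_assoc, mul_div_cancel_right₀]
    exact_mod_cast hN.ne'
  have hk : N * (k / N) + k % N ≤ N ^ (m + 1) := by
    rw [Nat.div_add_mod]; exact floor_mul_pow_le t (m + 1)
  calc dist (chainApprox c N x x' m t) (chainApprox c N x x' (m + 1) t)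
      = dist (chainGrid c N x x' (m + 1) (N * (k / N)))
          (chainGrid c N x x' (m + 1) (N * (k / N) + k % N)) := by
        rw [chainApprox, chainApprox, hdiv, chainGrid_succ_mul hc hN, Nat.div_add_mod]
    _ ≤ ((k % N : ℕ) : ℝ) * (ρ ^ (m + 1) * dist x x') := by
        simpa using dist_chainGrid_le hc hN hρ (Nat.le_add_right _ _) hk
    _ ≤ N * (ρ ^ (m + 1) * dist x x') := by
        gcongr; exact_mod_cast (Nat.mod_lt k hN).le
    _ = N * ρ * dist x x' * ρ ^ m := by ring

theorem dist_chainApprox_le_of_dist_lt (hc : ∀ a b, IsShortChain ρ N a b (c a b)) (hN : 0 < N)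
    (hρ : 0 ≤ ρ) (m : ℕ) {s t : unitInterval} (hst : dist s t < ((N : ℝ) ^ m)⁻¹) :
    dist (chainApprox c N x x' m s) (chainApprox c N x x' m t) ≤ dist x x' * ρ ^ m := by
  wlog hle : s ≤ t generalizing s t
  · rw [dist_comm]; exact this (dist_comm s t ▸ hst) (le_of_not_ge hle)
  have hNm : (0 : ℝ) < (N : ℝ) ^ m := by positivity
  have hs : 0 ≤ (s : ℝ) * N ^ m := mul_nonneg s.2.1 hNm.le
  have hts : (t : ℝ) - s < ((N : ℝ) ^ m)⁻¹ :=
    (le_abs_self _).trans_lt (by rwa [abs_sub_comm, ← Real.dist_eq, ← Subtype.dist_eq])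
  have hlt : (t : ℝ) * N ^ m ≤ (s : ℝ) * N ^ m + 1 := by
    have := mul_lt_mul_of_pos_right hts hNm
    rw [inv_mul_cancel₀ hNm.ne', sub_mul] at this
    linarith
  have hfl : ⌊(t : ℝ) * N ^ m⌋₊ ≤ ⌊(s : ℝ) * N ^ m⌋₊ + 1 :=
    Nat.floor_add_one hs ▸ Nat.floor_le_floor hlt
  calc _ ≤ ((⌊(t : ℝ) * N ^ m⌋₊ - ⌊(s : ℝ) * N ^ m⌋₊ : ℕ) : ℝ) * (ρ ^ m * dist x x') :=
        dist_chainGrid_le hc hN hρ (Nat.floor_le_floor (by gcongr))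
          (floor_mul_pow_le t m)
    _ ≤ 1 * (ρ ^ m * dist x x') := by gcongr; exact_mod_cast Nat.sub_le_iff_le_add'.2 hfl
    _ = dist x x' * ρ ^ m := by ring

theorem dist_le_of_tendsto_chainApprox (hc : ∀ a b, IsShortChain ρ N a b (c a b)) (hN : 0 < N)
    (hρ0 : 0 ≤ ρ) (hρ1 : ρ < 1) {t : unitInterval} {y : M}
    (hy : Tendsto (chainApprox c N x x' · t) atTop (𝓝 y)) :
    dist x y ≤ N * ρ * dist x x' / (1 - ρ) := by
  have hfirst : dist x (chainApprox c N x x' 1 t) ≤ N * ρ * dist x x' := by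
    have := dist_chainGrid_le (x := x) (x' := x') hc hN hρ0 (Nat.zero_le _) (floor_mul_pow_le t 1)
    rw [chainGrid_apply_zero hc hN] at this
    refine this.trans ?_
    rw [Nat.sub_zero, pow_one ρ, ← mul_assoc]
    gcongr
    simpa using floor_mul_pow_le t 1
  have htail := dist_le_of_le_geometric_of_tendsto ρ _ hρ1
    (dist_chainApprox_succ_le hc hN hρ0 · t) hy 1
  have h1ρ : 0 < 1 - ρ := sub_pos.2 hρ1
  calc dist x y ≤ dist x (chainApprox c N x x' 1 t) + dist (chainApprox c N x x' 1 t) y :=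
        dist_triangle _ _ _
    _ ≤ N * ρ * dist x x' + N * ρ * dist x x' * ρ ^ 1 / (1 - ρ) := add_le_add hfirst htail
    _ = N * ρ * dist x x' / (1 - ρ) := by field_simp; ring

end ChainApprox

/-- If `M` is a complete metric space and there are `0 < ρ < 1` and `N : ℕ` such
that every pair of points `x, x'` is joined by a `ρ`-chain of length `N` (a sequence
`x = b 0, …, b N = x'` with consecutive distances at most `ρ * dist x x'`), then, with
`ν = 2 * N * ρ / (1 - ρ)`, any two points `x, x'` are joined by a continuous path
`γ : [0,1] → M` from `x` to `x'` whose image has diameter at most `ν * dist x x'`. -/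
theorem path_connected_of_chains_complete
    {M : Type*} [MetricSpace M] [CompleteSpace M]
    (ρ : ℝ) (hρ0 : 0 < ρ) (hρ1 : ρ < 1) (N : ℕ)
    (hchain : ∀ x x' : M, ∃ b : ℕ → M, b 0 = x ∧ b N = x' ∧
      ∀ j : ℕ, 1 ≤ j → j ≤ N → dist (b (j - 1)) (b j) ≤ ρ * dist x x') :
    ∀ x x' : M, ∃ γ : Path x x',
      Metric.diam (Set.range (γ : unitInterval → M)) ≤ (2 * N * ρ / (1 - ρ)) * dist x x' := by
  intro x x'
  rcases N.eq_zero_or_pos with rfl | hN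
  · obtain ⟨b, rfl, rfl, -⟩ := hchain x x'
    exact ⟨Path.refl _, by simp⟩
  choose c hc using hchain
  have hchain : ∀ a b, IsShortChain ρ N a b (c a b) := fun a b =>
    ⟨(hc a b).1, (hc a b).2.1, fun j hj => by simpa using (hc a b).2.2 (j + 1) (by omega) hj⟩
  obtain ⟨γ, hγc, hγ⟩ := exists_uniformContinuous_tendsto_of_dist_succ_le_geometric hρ0.le hρ1
    (dist_chainApprox_succ_le (x := x) (x' := x') hchain hN hρ0.le)
    fun m => ⟨_, by positivity, fun _ _ => dist_chainApprox_le_of_dist_lt hchain hN hρ0.le m⟩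
  have hsource : γ 0 = x :=
    tendsto_nhds_unique (hγ 0) (by simp [chainApprox_zero hchain hN])
  have htarget : γ 1 = x' :=
    tendsto_nhds_unique (hγ 1) (by simp [chainApprox_one hchain hN])
  refine ⟨⟨⟨γ, hγc.continuous⟩, hsource, htarget⟩, Metric.diam_le_of_forall_dist_le
    (mul_nonneg (div_nonneg (by positivity) (sub_pos.2 hρ1).le) dist_nonneg) ?_⟩
  rintro _ ⟨s, rfl⟩ _ ⟨t, rfl⟩
  calc dist (γ s) (γ t) ≤ dist x (γ s) + dist x (γ t) := dist_triangle_left _ _ _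
    _ ≤ N * ρ * dist x x' / (1 - ρ) + N * ρ * dist x x' / (1 - ρ) :=
        add_le_add (dist_le_of_tendsto_chainApprox hchain hN hρ0.le hρ1 (hγ s))
          (dist_le_of_tendsto_chainApprox hchain hN hρ0.le hρ1 (hγ t))
    _ = 2 * N * ρ / (1 - ρ) * dist x x' := by ring
end

section
/- Let M be a metric space and suppose there exist real numbers ρ < 1, ρ > 0 and N ∈ ℕ such that every pair of points of M is joined by a ρ-chain of length N. Set ν = 2Nρ/(1−ρ). Then for every ε > 0 and every pair of points x, x' ∈ M there is a finite sequence x = b_0, b_1, …, b_k = x' with d(b_{i−1}, b_i) ≤ ε for all i, and with d(x, b_i) ≤ ν·d(x,x') for all i. -/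
/-!
Replacing every step of a chain by a `ρ`-chain between its endpoints multiplies the step bound
`δ` by `ρ`, while the new points stay within `N * ρ * δ` of the old ones. Starting from a single
`ρ`-chain from `x` to `x'` and refining `n` times, the steps become at most `ρ ^ (n + 1) * d(x, x')`
and the points move away from `x` by at most a geometric series `N * (ρ + ρ ^ 2 + ⋯) * d(x, x')`,
which is bounded by `N * ρ / (1 - ρ) * d(x, x')`.
-/

open Relation

section Sequences

variable {α : Type*} {r : α → α → Prop}

theorem reflTransGen_of_seq (b : ℕ → α) (k : ℕ)
    (hb : ∀ i, 1 ≤ i → i ≤ k → r (b (i - 1)) (b i)) : ReflTransGen r (b 0) (b k) := by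
  induction k with
  | zero => rfl
  | succ k ih =>
    exact (ih fun i h1 h2 => hb i h1 (by omega)).tail (by simpa using hb (k + 1) (by omega) le_rfl)

theorem exists_seq_of_reflTransGen {a c : α} (h : ReflTransGen r a c) :
    ∃ k : ℕ, ∃ b : ℕ → α, b 0 = a ∧ b k = c ∧ ∀ i, 1 ≤ i → i ≤ k → r (b (i - 1)) (b i) := by
  induction h with
  | refl => exact ⟨0, fun _ => a, rfl, rfl, fun i h1 h2 => by omega⟩
  | @tail c d _ hcd ih =>
    obtain ⟨k, b, hb0, hbk, hb⟩ := ih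
    refine ⟨k + 1, fun i => if i ≤ k then b i else d, by simpa using hb0, by simp, ?_⟩
    intro i h1 h2
    rcases Nat.lt_or_ge k i with hki | hik
    · obtain rfl : i = k + 1 := by omega
      simpa [hbk] using hcd
    · simpa [hik, show i - 1 ≤ k by omega] using hb i h1 hik

end Sequences

section Chains

variable {M : Type*} [MetricSpace M]

theorem dist_zero_le_of_dist_succ_le {b : ℕ → M} {k : ℕ} {δ : ℝ}
    (hb : ∀ i, 1 ≤ i → i ≤ k → dist (b (i - 1)) (b i) ≤ δ) {i : ℕ} (hi : i ≤ k) :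
    dist (b 0) (b i) ≤ i * δ := by
  calc dist (b 0) (b i) ≤ ∑ j ∈ Finset.range i, dist (b j) (b (j + 1)) :=
        dist_le_range_sum_dist b i
    _ ≤ (Finset.range i).card • δ :=
        Finset.sum_le_card_nsmul _ _ _ fun j hj => by
          simpa using hb (j + 1) (by omega) (by simp at hj; omega)
    _ = i * δ := by simp

variable (M) in
def HasUniformChains (ρ : ℝ) (N : ℕ) : Prop :=
  ∀ x x' : M, ∃ b : ℕ → M, b 0 = x ∧ b N = x' ∧
    ∀ j : ℕ, 1 ≤ j → j ≤ N → dist (b (j - 1)) (b j) ≤ ρ * dist x x'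

def ShortStepNear (x : M) (δ r : ℝ) (a b : M) : Prop :=
  dist a b ≤ δ ∧ dist x a ≤ r ∧ dist x b ≤ r

variable {ρ : ℝ} {N : ℕ}

theorem HasUniformChains.reflTransGen_shortStepNear (hM : HasUniformChains M ρ N) (hρ : 0 ≤ ρ)
    {x a b : M} {δ r : ℝ} (hab : dist a b ≤ δ) (ha : dist x a ≤ r) :
    ReflTransGen (ShortStepNear x (ρ * δ) (r + N * ρ * δ)) a b := by
  obtain ⟨c, rfl, rfl, hc⟩ := hM a b
  have hstep : ∀ j, 1 ≤ j → j ≤ N → dist (c (j - 1)) (c j) ≤ ρ * δ :=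
    fun j h1 h2 => (hc j h1 h2).trans (by gcongr)
  have hδ : 0 ≤ ρ * δ := mul_nonneg hρ (dist_nonneg.trans hab)
  have hnear : ∀ j ≤ N, dist x (c j) ≤ r + N * ρ * δ := fun j hj =>
    calc dist x (c j) ≤ dist x (c 0) + dist (c 0) (c j) := dist_triangle _ _ _
      _ ≤ r + j * (ρ * δ) := add_le_add ha (dist_zero_le_of_dist_succ_le hstep hj)
      _ ≤ r + N * (ρ * δ) := by gcongr
      _ = r + N * ρ * δ := by ring
  exact reflTransGen_of_seq c N fun j h1 h2 => ⟨hstep j h1 h2, hnear _ (by omega), hnear j h2⟩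

/-- The quantity `r + N * ρ * δ / (1 - ρ)` does not change from one refinement to the next. -/
theorem HasUniformChains.reflTransGen_shortStepNear_pow (hM : HasUniformChains M ρ N)
    (hρ0 : 0 ≤ ρ) (hρ1 : ρ ≠ 1) {x a b : M} {δ r : ℝ} (h : ReflTransGen (ShortStepNear x δ r) a b)
    (n : ℕ) :
    ReflTransGen (ShortStepNear x (ρ ^ n * δ) (r + N * ρ * δ * (1 - ρ ^ n) / (1 - ρ))) a b := by
  induction n with
  | zero => simpa using h
  | succ n ih =>
    have hδ : ρ * (ρ ^ n * δ) = ρ ^ (n + 1) * δ := by ring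
    have hr : r + N * ρ * δ * (1 - ρ ^ n) / (1 - ρ) + N * ρ * (ρ ^ n * δ) =
        r + N * ρ * δ * (1 - ρ ^ (n + 1)) / (1 - ρ) := by
      field_simp [sub_ne_zero.mpr hρ1.symm]
      ring
    rw [← hδ, ← hr]
    exact reflTransGen_closed (fun c d hcd => hM.reflTransGen_shortStepNear hρ0 hcd.1 hcd.2.1) _ _ ih

end Chains

/-- If `M` is a metric space and there are `0 < ρ < 1` and `N : ℕ` such that every
pair of points is joined by a `ρ`-chain of length `N`, then, with `ν = 2 * N * ρ / (1 - ρ)`, for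
every `ε > 0` and all `x, x'` there is a finite sequence `x = b 0, …, b k = x'` whose consecutive
gaps are at most `ε` and all of whose points lie within distance `ν * dist x x'` of `x`. -/
theorem fine_chains_of_chains
    {M : Type*} [MetricSpace M]
    (ρ : ℝ) (hρ0 : 0 < ρ) (hρ1 : ρ < 1) (N : ℕ)
    (hchain : ∀ x x' : M, ∃ b : ℕ → M, b 0 = x ∧ b N = x' ∧
      ∀ j : ℕ, 1 ≤ j → j ≤ N → dist (b (j - 1)) (b j) ≤ ρ * dist x x') :
    ∀ ε > (0 : ℝ), ∀ x x' : M, ∃ k : ℕ, ∃ b : ℕ → M, b 0 = x ∧ b k = x' ∧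
      (∀ i : ℕ, 1 ≤ i → i ≤ k → dist (b (i - 1)) (b i) ≤ ε) ∧
      ∀ i : ℕ, i ≤ k → dist x (b i) ≤ (2 * N * ρ / (1 - ρ)) * dist x x' := by
  intro ε hε x x'
  set D := dist x x'
  have hM : HasUniformChains M ρ N := hchain
  have hstart := hM.reflTransGen_shortStepNear hρ0.le (le_refl D) (dist_self x).le
  rw [zero_add] at hstart
  obtain ⟨n, hn⟩ : ∃ n : ℕ, ρ ^ n * (ρ * D) ≤ ε :=
    (((tendsto_pow_atTop_nhds_zero_of_lt_one hρ0.le hρ1).mul_const (ρ * D)).eventually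
      (ge_mem_nhds (by simpa using hε))).exists
  obtain ⟨k, b, hb0, hbk, hb⟩ :=
    exists_seq_of_reflTransGen (hM.reflTransGen_shortStepNear_pow hρ0.le hρ1.ne hstart n)
  have h1ρ : 0 < 1 - ρ := sub_pos.mpr hρ1
  have hradius : N * ρ * D + N * ρ * (ρ * D) * (1 - ρ ^ n) / (1 - ρ) ≤
      2 * N * ρ / (1 - ρ) * D := by
    rw [← sub_nonneg]
    have : 2 * N * ρ / (1 - ρ) * D - (N * ρ * D + N * ρ * (ρ * D) * (1 - ρ ^ n) / (1 - ρ)) =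
        N * ρ * D * (1 + ρ ^ (n + 1)) / (1 - ρ) := by
      field_simp
      ring
    rw [this]
    positivity
  refine ⟨k, b, hb0, hbk, fun i h1 h2 => (hb i h1 h2).1.trans hn, fun i hi => ?_⟩
  rcases Nat.eq_zero_or_pos i with rfl | hi0
  · rw [hb0, dist_self]
    positivity
  · exact (hb i hi0 hi).2.2.trans hradius
end

section
/- Let X be a proper geodesic δ-hyperbolic metric space (four-point condition). Suppose there is a group G acting on X by isometries and a compact set K ⊆ X whose G-translates cover X, and suppose X contains a bi-infinite geodesic (an isometric embedding ℝ → X). Then geodesics in X are almost extendable: there exists a constant C such that for all points p, q ∈ X there is a geodesic ray based at p whose image meets the closed ball of radius C about q. -/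
/-!
By cocompactness every `q` lies within a uniform distance of some translate `L` of the given
line. Since `(L r | L (-r))_{L 0} = 0`, hyperbolicity gives, for every `r`, an endpoint `e` of
`L [-r, r]` with `(p|e)_{L 0} ≤ δ`, so a geodesic from `p` to `e` passes within `3δ` of `L 0`.
These segments from `p` are arbitrarily long, and in a proper space a subsequential limit of
them is a ray from `p` that still passes near `q`.
-/

open Set Filter Metric Topology
open scoped Pointwise

/-- The Gromov product `(x|y)_p = ½(d(x,p) + d(y,p) − d(x,y))`. -/
noncomputable def gromovProd {X : Type*} [MetricSpace X] (p x y : X) : ℝ :=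
  (dist x p + dist y p - dist x y) / 2

/-- `X` is `δ`-hyperbolic in the four-point sense. -/
def DeltaHyperbolic (X : Type*) [MetricSpace X] (δ : ℝ) : Prop :=
  ∀ w x y z : X, min (gromovProd w x z) (gromovProd w z y) - δ ≤ gromovProd w x y

/-- `X` is a geodesic space: every pair of points is joined by a geodesic segment. -/
def IsGeodesicSpace (X : Type*) [MetricSpace X] : Prop :=
  ∀ x y : X, ∃ γ : ℝ → X, γ 0 = x ∧ γ (dist x y) = y ∧
    ∀ s ∈ Icc 0 (dist x y), ∀ t ∈ Icc 0 (dist x y), dist (γ s) (γ t) = |s - t|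

/-- `c : ℝ → X` is a geodesic ray based at `p`: it is an isometric embedding on `[0,∞)`
with `c 0 = p`. -/
def IsGeodesicRay {X : Type*} [MetricSpace X] (c : ℝ → X) (p : X) : Prop :=
  c 0 = p ∧ ∀ s ∈ Ici (0 : ℝ), ∀ t ∈ Ici (0 : ℝ), dist (c s) (c t) = |s - t|

section Geodesics

variable {X : Type*} [MetricSpace X]

def IsGeodesicSegment (γ : ℝ → X) (p : X) (ℓ : ℝ) : Prop :=
  γ 0 = p ∧ ∀ s ∈ Icc 0 ℓ, ∀ t ∈ Icc 0 ℓ, dist (γ s) (γ t) = |s - t|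

lemma IsGeodesicSegment.dist_base {γ : ℝ → X} {p : X} {ℓ t : ℝ}
    (hγ : IsGeodesicSegment γ p ℓ) (ht : t ∈ Icc 0 ℓ) : dist (γ t) p = t := by
  rw [← hγ.1, hγ.2 t ht 0 ⟨le_rfl, ht.1.trans ht.2⟩, sub_zero, abs_of_nonneg ht.1]

lemma gromovProd_comm (w x y : X) : gromovProd w x y = gromovProd w y x := by
  unfold gromovProd; rw [dist_comm x y]; ring

/-- At the point `z` of the segment at distance `(y|m)_x` from `x` we have `(x|y)_z = 0`, and
either alternative of the four-point condition at `z` bounds `d(m, z)`. -/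
theorem DeltaHyperbolic.exists_dist_le_gromovProd_add {δ : ℝ} (hhyp : DeltaHyperbolic X δ)
    {γ : ℝ → X} {x y : X} (hγ : IsGeodesicSegment γ x (dist x y)) (hy : γ (dist x y) = y)
    (m : X) : ∃ t ∈ Icc 0 (dist x y), dist m (γ t) ≤ gromovProd m x y + 2 * δ := by
  obtain ⟨t₀, ht₀_def⟩ : ∃ t₀, t₀ = gromovProd x y m := ⟨_, rfl⟩
  have hxy := dist_triangle x m y
  have hxm := dist_triangle x y m
  have hym := dist_triangle y x m
  rw [gromovProd, dist_comm y x, dist_comm m x] at ht₀_def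
  rw [dist_comm m y] at hxy
  rw [dist_comm y x] at hym
  have ht₀ : t₀ ∈ Icc 0 (dist x y) := by constructor <;> linarith
  have hzx : dist x (γ t₀) = t₀ := by rw [dist_comm, hγ.dist_base ht₀]
  have hzy : dist y (γ t₀) = dist x y - t₀ := by
    have h := hγ.2 (dist x y) ⟨dist_nonneg, le_rfl⟩ t₀ ht₀
    rwa [hy, abs_of_nonneg (by linarith [ht₀.2])] at h
  have hzero : gromovProd (γ t₀) x y = 0 := by rw [gromovProd, hzx, hzy]; ring
  have hmin := hhyp (γ t₀) x y m
  rw [hzero, sub_nonpos, min_le_iff] at hmin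
  refine ⟨t₀, ht₀, ?_⟩
  simp only [gromovProd, hzx, hzy, dist_comm m (γ t₀), dist_comm m y] at hmin ⊢
  rcases hmin with h | h <;> linarith

theorem DeltaHyperbolic.exists_gromovProd_le_of_isometry {δ : ℝ} (hhyp : DeltaHyperbolic X δ)
    {L : ℝ → X} (hL : Isometry L) (p : X) (r : ℝ) :
    ∃ e, r ≤ dist (L 0) e ∧ gromovProd (L 0) p e ≤ δ := by
  have hdist : ∀ s t, dist (L s) (L t) = |s - t| := fun s t => by
    rw [hL.dist_eq, Real.dist_eq]
  have hr : dist (L 0) (L r) = |r| := by rw [hdist, zero_sub, abs_neg]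
  have hr' : dist (L 0) (L (-r)) = |r| := by rw [hdist, zero_sub, neg_neg]
  have hmin := hhyp (L 0) (L r) (L (-r)) p
  have hzero : gromovProd (L 0) (L r) (L (-r)) = 0 := by
    rw [gromovProd, dist_comm (L r), dist_comm (L (-r)), hr, hr', hdist, sub_neg_eq_add,
      ← two_mul r, abs_mul, abs_two]
    ring
  rw [hzero, sub_nonpos, min_le_iff] at hmin
  rcases hmin with h | h
  · exact ⟨L r, hr ▸ le_abs_self r, gromovProd_comm (L 0) p (L r) ▸ h⟩
  · exact ⟨L (-r), hr' ▸ le_abs_self r, h⟩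

theorem exists_isGeodesicSegment_near_isometry (hgeo : IsGeodesicSpace X) {δ : ℝ}
    (hhyp : DeltaHyperbolic X δ) {L : ℝ → X} (hL : Isometry L) (p : X) (r : ℝ) :
    ∃ γ ℓ, r ≤ ℓ ∧ IsGeodesicSegment γ p ℓ ∧ ∃ t ∈ Icc 0 ℓ, dist (L 0) (γ t) ≤ 3 * δ := by
  obtain ⟨e, hre, he⟩ := hhyp.exists_gromovProd_le_of_isometry hL p (r + dist (L 0) p)
  obtain ⟨γ, hγp, hγe, hγ⟩ := hgeo p e
  obtain ⟨t, ht, hdist⟩ := hhyp.exists_dist_le_gromovProd_add ⟨hγp, hγ⟩ hγe (L 0)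
  refine ⟨γ, dist p e, ?_, ⟨hγp, hγ⟩, t, ht, by linarith⟩
  linarith [dist_triangle (L 0) p e]

lemma IsCompact.exists_tendsto_ultrafilter {α β : Type*} [TopologicalSpace β] {s : Set β}
    (hs : IsCompact s) {U : Ultrafilter α} {f : α → β} (hf : ∀ᶠ a in U, f a ∈ s) :
    ∃ x ∈ s, Tendsto f U (𝓝 x) := by
  obtain ⟨x, hx, hle⟩ := hs.ultrafilter_le_nhds' (U.map f) (Ultrafilter.mem_map.2 hf)
  exact ⟨x, hx, by rwa [Ultrafilter.coe_map] at hle⟩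

section Limit

variable {p : X} {γ : ℕ → ℝ → X} {ℓ : ℕ → ℝ}

lemma eventually_dist_eq_of_isGeodesicSegment {l : Filter ℕ} (hℓ : Tendsto ℓ l atTop)
    (hγ : ∀ n, IsGeodesicSegment (γ n) p (ℓ n)) {s t : ℝ} (hs : 0 ≤ s) (ht : 0 ≤ t) :
    ∀ᶠ n in l, dist (γ n s) (γ n t) = |s - t| := by
  filter_upwards [hℓ.eventually_ge_atTop (max s t)] with n hn
  exact (hγ n).2 s ⟨hs, (le_max_left s t).trans hn⟩ t ⟨ht, (le_max_right s t).trans hn⟩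

variable [ProperSpace X] {U : Ultrafilter ℕ}

lemma exists_tendsto_of_isGeodesicSegment (hℓ : Tendsto ℓ U atTop)
    (hγ : ∀ n, IsGeodesicSegment (γ n) p (ℓ n)) {t : ℝ} (ht : 0 ≤ t) :
    ∃ x, Tendsto (fun n => γ n t) U (𝓝 x) := by
  have hball : ∀ᶠ n in U, γ n t ∈ closedBall p t := by
    filter_upwards [eventually_dist_eq_of_isGeodesicSegment hℓ hγ ht le_rfl] with n hn
    rw [mem_closedBall, ← (hγ n).1, hn, sub_zero, abs_of_nonneg ht]
  obtain ⟨x, -, hx⟩ := (isCompact_closedBall p t).exists_tendsto_ultrafilter hball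
  exact ⟨x, hx⟩

theorem isGeodesicRay_limUnder [Nonempty X] (hℓ : Tendsto ℓ U atTop)
    (hγ : ∀ n, IsGeodesicSegment (γ n) p (ℓ n)) :
    IsGeodesicRay (fun t => limUnder (U : Filter ℕ) (fun n => γ n t)) p := by
  have hlim : ∀ t, 0 ≤ t → Tendsto (fun n => γ n t) U (𝓝 (limUnder (U : Filter ℕ) (γ · t))) :=
    fun t ht => tendsto_nhds_limUnder (exists_tendsto_of_isGeodesicSegment hℓ hγ ht)
  refine ⟨tendsto_nhds_unique (hlim 0 le_rfl) ?_, fun s hs t ht => ?_⟩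
  · simp only [(hγ _).1, tendsto_const_nhds]
  · refine tendsto_nhds_unique ((hlim s hs).dist (hlim t ht)) ?_
    exact tendsto_const_nhds.congr' <|
      (eventually_dist_eq_of_isGeodesicSegment hℓ hγ hs ht).mono fun n hn => hn.symm

end Limit

/-- Arzelà–Ascoli along an ultrafilter: the segments converge pointwise to a ray, and the
parameters at which they meet `S` are bounded, so they converge too. -/
theorem exists_isGeodesicRay_mem_of_forall_isGeodesicSegment [ProperSpace X] {p : X}
    {S : Set X} (hS : IsCompact S)
    (h : ∀ r : ℝ, ∃ γ ℓ, r ≤ ℓ ∧ IsGeodesicSegment γ p ℓ ∧ ∃ t ∈ Icc 0 ℓ, γ t ∈ S) :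
    ∃ c, IsGeodesicRay c p ∧ ∃ t ≥ 0, c t ∈ S := by
  have : Nonempty X := ⟨p⟩
  choose γ ℓ hnℓ hγ t ht hγt using fun n : ℕ => h n
  set U : Ultrafilter ℕ := Ultrafilter.of atTop
  have hℓ : Tendsto ℓ U atTop :=
    (tendsto_atTop_mono hnℓ tendsto_natCast_atTop_atTop).mono_left (Ultrafilter.of_le atTop)
  obtain ⟨R, hR⟩ := hS.isBounded.subset_closedBall p
  have htR : ∀ n, t n ∈ Icc 0 R := fun n =>
    ⟨(ht n).1, (hγ n).dist_base (ht n) ▸ mem_closedBall.1 (hR (hγt n))⟩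
  obtain ⟨τ, hτ, htτ⟩ := isCompact_Icc.exists_tendsto_ultrafilter (Eventually.of_forall htR)
  refine ⟨_, isGeodesicRay_limUnder hℓ hγ, τ, hτ.1, hS.isClosed.mem_of_tendsto (b := (U : Filter ℕ))
    (f := fun n => γ n (t n)) ?_ (Eventually.of_forall hγt)⟩
  refine (tendsto_nhds_limUnder (exists_tendsto_of_isGeodesicSegment hℓ hγ hτ.1)).congr_dist ?_
  have hdist : ∀ᶠ n in U, dist (γ n τ) (γ n (t n)) = |τ - t n| := by
    filter_upwards [hℓ.eventually_ge_atTop R] with n hn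
    exact (hγ n).2 τ ⟨hτ.1, hτ.2.trans hn⟩ (t n) (ht n)
  have hτlim : Tendsto (fun n => |τ - t n|) U (𝓝 0) := by
    simpa using ((tendsto_const_nhds (x := τ)).sub htτ).abs
  exact hτlim.congr' (hdist.mono fun n hn => hn.symm)

end Geodesics

theorem almost_extendable_of_cocompact_general
    {X : Type*} {G : Type*} [MetricSpace X] [ProperSpace X]
    [Group G] [MulAction G X] [IsIsometricSMul G X]
    (δ : ℝ) (hgeo : IsGeodesicSpace X) (hhyp : DeltaHyperbolic X δ)
    (K : Set X) (hK : IsCompact K) (hcover : ⋃ g : G, g • K = univ)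
    (line : ℝ → X) (hline : Isometry line) :
    ∃ C : ℝ, ∀ p q : X, ∃ c : ℝ → X, IsGeodesicRay c p ∧
      ∃ t ≥ (0 : ℝ), c t ∈ closedBall q C := by
  obtain ⟨R, hR⟩ := hK.isBounded.subset_closedBall (line 0)
  refine ⟨3 * δ + R, fun p q => ?_⟩
  obtain ⟨g, k, hk, rfl⟩ : ∃ g : G, ∃ k ∈ K, g • k = q := by
    simpa [mem_smul_set] using hcover.ge (mem_univ q)
  have hL : Isometry (fun t => g • line t) := (isometry_smul X g).comp hline
  have hkL : dist (g • line 0) (g • k) ≤ R := by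
    rw [dist_smul, dist_comm]; exact hR hk
  refine exists_isGeodesicRay_mem_of_forall_isGeodesicSegment (isCompact_closedBall _ _)
    fun r => ?_
  obtain ⟨γ, ℓ, hrℓ, hγ, t, ht, hγt⟩ := exists_isGeodesicSegment_near_isometry hgeo hhyp hL p r
  refine ⟨γ, ℓ, hrℓ, hγ, t, ht, ?_⟩
  rw [mem_closedBall]
  linarith [dist_triangle (γ t) (g • line 0) (g • k), dist_comm (γ t) (g • line 0)]

/-- If `X` is a proper geodesic `δ`-hyperbolic space, `G` acts on `X` by
isometries with a compact set `K` whose translates cover `X`, and `X` contains a bi-infinite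
geodesic (an isometric embedding `ℝ → X`), then geodesics in `X` are almost extendable: there is
`C` such that for all `p, q ∈ X` some geodesic ray based at `p` meets the closed ball of radius
`C` about `q`. -/
theorem almost_extendable_of_cocompact
    {X : Type*} {G : Type*} [MetricSpace X] [ProperSpace X]
    [Group G] [MulAction G X] [IsIsometricSMul G X]
    (δ : ℝ) (hδ : 0 ≤ δ) (hgeo : IsGeodesicSpace X) (hhyp : DeltaHyperbolic X δ)
    (K : Set X) (hK : IsCompact K) (hcover : ⋃ g : G, g • K = univ)
    (line : ℝ → X) (hline : Isometry line) :
    ∃ C : ℝ, ∀ p q : X, ∃ c : ℝ → X, IsGeodesicRay c p ∧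
      ∃ t ≥ (0 : ℝ), c t ∈ closedBall q C :=
  almost_extendable_of_cocompact_general δ hgeo hhyp K hK hcover line hline
end
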